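/- For the derivative functor D on FI-modules, D(M(i)) ≅ M(i−1)^{⊕ i} for all i ≥ 1, and D(M(0)) = 0; in particular D sends projective FI-modules to projective FI-modules. -/

import Mathlib

open CategoryTheory CategoryTheory.Limits

def FI : Type := ℕ
def FI.of : ℕ → FI := id
def FI.n : FI → ℕ := id
instance : Category FI where
  Hom m n := Fin m.n ↪ Fin n.n
  id _ := Function.Embedding.refl _
  comp f g := f.trans g
  id_comp _ := rfl
  comp_id _ := rfl
  assoc _ _ _ := rfl
abbrev FIMod (k : Type) [CommRing k] := FI ⥤ ModuleCat.{0} k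

/-- Extension of an injection `[m] → [n]` to `[m+1] → [n+1]` fixing the new first point. -/
def extEmb {m n : ℕ} (f : Fin m ↪ Fin n) : Fin (m + 1) ↪ Fin (n + 1) :=
  ⟨fun x => Fin.cases 0 (fun r => (f r).succ) x, by
    intro a b h
    induction a using Fin.cases with
    | zero =>
      induction b using Fin.cases with
      | zero => rfl
      | succ j => simp at h; exact absurd h.symm (Fin.succ_ne_zero _)
    | succ i =>
      induction b using Fin.cases with
      | zero => simp at h
      | succ j =>
        simp only [Fin.cases_succ] at h
        exact congrArg Fin.succ (f.injective (Fin.succ_injective _ h))⟩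

@[simp] lemma extEmb_zero {m n : ℕ} (f : Fin m ↪ Fin n) : extEmb f 0 = 0 := rfl
@[simp] lemma extEmb_succ {m n : ℕ} (f : Fin m ↪ Fin n) (r : Fin m) :
    extEmb f r.succ = (f r).succ := rfl

/-- Extensionality for morphisms in `FI`. -/
lemma FI.hom_ext {m n : FI} {f g : Fin m.n ↪ Fin n.n} (h : ∀ x, f x = g x) :
    f = g := DFunLike.ext f g h

/-- The self-embedding `ι : FI → FI`, `[n] ↦ [n+1]`. -/
def iota : FI ⥤ FI where
  obj n := FI.of (n.n + 1)
  map f := extEmb f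
  map_id n := by
    refine FI.hom_ext fun x => ?_
    induction x using Fin.cases <;> rfl
  map_comp {a b c} f g := by
    refine FI.hom_ext fun x => ?_
    induction x using Fin.cases with
    | zero => rfl
    | succ i =>
      show extEmb (f.trans g) i.succ = extEmb g (extEmb f i.succ)
      simp

variable (k : Type) [CommRing k]

/-- The shift functor `Σ` on `FI`-modules. -/
def shiftF : FIMod k ⥤ FIMod k := (Functor.whiskeringLeft FI FI (ModuleCat k)).obj iota

/-- The natural transformation `Id → ι` given by the inclusions `[n] ↪ [n+1]`, `r ↦ r+1`. -/
def piTrans : 𝟭 FI ⟶ iota where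
  app n := ⟨Fin.succ, Fin.succ_injective _⟩
  naturality m n f := by
    refine FI.hom_ext fun x => ?_
    rfl

/-- The natural map `V → ΣV`. -/
def toShift (V : FIMod k) : V ⟶ (shiftF k).obj V :=
  V.leftUnitor.inv ≫ Functor.whiskerRight piTrans V

/-- `V → ΣV` as a natural transformation of endofunctors. -/
def natToShift : 𝟭 (FIMod k) ⟶ shiftF k where
  app V := toShift k V
  naturality V W φ := by
    ext n
    simp only [Functor.id_obj, Functor.id_map, toShift, shiftF, Functor.whiskeringLeft_obj_obj,
      Functor.comp_obj, Category.assoc, NatTrans.comp_app, Functor.leftUnitor_inv_app,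
      Functor.whiskerRight_app, Functor.whiskeringLeft_obj_map, Functor.whiskerLeft_app, Category.id_comp]
    exact ConcreteCategory.congr_hom (φ.naturality (piTrans.app n)).symm _

/-- The derivative `DV`, the cokernel of `V → ΣV`. -/
noncomputable def Dobj (V : FIMod k) : FIMod k := cokernel (toShift k V)

/-- The derivative functor `D`. -/
noncomputable def Dfun : FIMod k ⥤ FIMod k where
  obj V := Dobj k V
  map {V W} φ := cokernel.map _ _ φ ((shiftF k).map φ) ((natToShift k).naturality φ).symm
  map_id V := by
    apply coequalizer.hom_ext
    simp [Dobj]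
  map_comp {U V W} φ ψ := by
    apply coequalizer.hom_ext
    simp [Dobj]

variable (k : Type) [CommRing k]

/-- An `FI`-submodule of an `FI`-module. -/
structure FISub {k : Type} [CommRing k] (V : FIMod k) where
  sub : ∀ n : FI, Submodule k (V.obj n)
  map_mem : ∀ {m n : FI} (f : m ⟶ n) (v : V.obj m), v ∈ sub m → (V.map f) v ∈ sub n

/-- `V` is generated in degrees `≤ N`. -/
def GeneratedIn {k : Type} [CommRing k] (V : FIMod k) (N : ℕ) : Prop :=
  ∀ W : FISub V, (∀ i : ℕ, i ≤ N → ∀ v : V.obj (FI.of i), v ∈ W.sub (FI.of i)) →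
    ∀ (n : FI) (v : V.obj n), v ∈ W.sub n

/-- `V` is a finitely generated `FI`-module. -/
def FG {k : Type} [CommRing k] (V : FIMod k) : Prop :=
  ∃ S : Finset ((n : ℕ) × V.obj (FI.of n)),
    ∀ W : FISub V, (∀ s ∈ S, s.2 ∈ W.sub (FI.of s.1)) → ∀ (n : FI) (v : V.obj n), v ∈ W.sub n

/-- `V` is torsionless: no nonzero element is killed by an injection. -/
def Torsionless {k : Type} [CommRing k] (V : FIMod k) : Prop :=
  ∀ (i : ℕ) (v : V.obj (FI.of i)), v ≠ 0 →
    ∀ α : FI.of i ⟶ FI.of (i + 1), (V.map α) v ≠ 0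


instance (k : Type) [CommRing k] : HasFiniteBiproducts (FIMod k) :=
  Abelian.hasFiniteBiproducts

variable (k : Type) [CommRing k]

/-- The free (representable) `FI`-module `M(i)`, the linearization of `FI(i,−)`. -/
noncomputable def Mrep (i : ℕ) : FIMod k where
  obj n := ModuleCat.of k ((Fin i ↪ Fin n.n) →₀ k)
  map {m n} f := ModuleCat.ofHom (Finsupp.lmapDomain k k fun (e : Fin i ↪ Fin m.n) => e.trans f)
  map_id n := by
    have : (fun e : Fin i ↪ Fin n.n => e.trans (𝟙 n)) = id := by
      funext e; ext x; rfl
    show ModuleCat.ofHom (Finsupp.lmapDomain k k _) = _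
    rw [this, Finsupp.lmapDomain_id]
    rfl
  map_comp {a b c} f g := by
    show ModuleCat.ofHom (Finsupp.lmapDomain k k _) = _
    have : (fun e : Fin i ↪ Fin a.n => e.trans (f ≫ g))
        = (fun e : Fin i ↪ Fin b.n => e.trans g) ∘ (fun e => e.trans f) := by
      funext e; ext x; rfl
    rw [this, Finsupp.lmapDomain_comp]
    rfl

lemma FI.le_of_hom {m n : FI} (f : m ⟶ n) : m.n ≤ n.n := by
  simpa using Fintype.card_le_of_embedding (f : Fin m.n ↪ Fin n.n)

/-- The submodule `(JV)_n ⊆ V_n` spanned by images from strictly lower degrees. -/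
def Jsub {k : Type} [CommRing k] (V : FIMod k) (n : FI) : Submodule k (V.obj n) :=
  ⨆ (m : FI) (_ : m.n < n.n) (f : m ⟶ n), LinearMap.range (V.map f).hom

lemma Jsub_le_comap {k : Type} [CommRing k] (V : FIMod k) {m n : FI} (f : m ⟶ n) :
    Jsub V m ≤ (Jsub V n).comap (V.map f).hom := by
  refine iSup_le fun m' => iSup_le fun hm' => iSup_le fun g => ?_
  rintro x ⟨y, rfl⟩
  simp only [Submodule.mem_comap]
  have h1 : (V.map f).hom ((V.map g).hom y) = (V.map (g ≫ f)).hom y := by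
    rw [V.map_comp]; rfl
  rw [h1]
  have h2 : m'.n < n.n := lt_of_lt_of_le hm' (FI.le_of_hom f)
  refine Submodule.mem_iSup_of_mem m' ?_
  refine Submodule.mem_iSup_of_mem h2 ?_
  exact Submodule.mem_iSup_of_mem (g ≫ f) ⟨y, rfl⟩

/-- The degreewise quotient `H₀(V) = V/JV` as an `FI`-module. -/
noncomputable def H0obj {k : Type} [CommRing k] (V : FIMod k) : FIMod k where
  obj n := ModuleCat.of k (V.obj n ⧸ Jsub V n)
  map {m n} f := ModuleCat.ofHom (Submodule.mapQ _ _ (V.map f).hom (Jsub_le_comap V f))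
  map_id n := by
    have h : V.map (𝟙 n) = 𝟙 (V.obj n) := V.map_id n
    refine ModuleCat.hom_ext (Submodule.linearMap_qext _ ?_)
    ext x
    show Submodule.Quotient.mk ((V.map (𝟙 n)).hom x) = _
    rw [h]
    rfl
  map_comp {a b c} f g := by
    have h : V.map (f ≫ g) = V.map f ≫ V.map g := V.map_comp f g
    refine ModuleCat.hom_ext (Submodule.linearMap_qext _ ?_)
    ext x
    show Submodule.Quotient.mk ((V.map (f ≫ g)).hom x) = _
    rw [h]
    rfl

/-- The functor `H₀ = ℂ̃₀ ⊗_{ℂ̃} − : FI-Mod → FI-Mod`. -/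
noncomputable def H0Functor (k : Type) [CommRing k] : FIMod k ⥤ FIMod k where
  obj := H0obj
  map {V W} φ :=
    { app := fun n => ModuleCat.ofHom (Submodule.mapQ (Jsub V n) (Jsub W n) (φ.app n).hom (by
        refine iSup_le fun m => iSup_le fun hm => iSup_le fun g => ?_
        rintro x ⟨y, rfl⟩
        simp only [Submodule.mem_comap]
        have h1 : (φ.app n).hom ((V.map g).hom y) = (W.map g).hom ((φ.app m).hom y) :=
          ConcreteCategory.congr_hom (φ.naturality g) y
        rw [h1]
        refine Submodule.mem_iSup_of_mem m (Submodule.mem_iSup_of_mem hm ?_)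
        exact Submodule.mem_iSup_of_mem g ⟨_, rfl⟩)),
      naturality := by
        intro m n f
        refine ModuleCat.hom_ext (Submodule.linearMap_qext _ ?_)
        ext x
        have h : (φ.app n).hom ((V.map f).hom x) = (W.map f).hom ((φ.app m).hom x) :=
          ConcreteCategory.congr_hom (φ.naturality f) x
        show Submodule.Quotient.mk ((φ.app n).hom ((V.map f).hom x)) = _
        rw [h]
        rfl }
  map_id V := by
    ext n : 2
    refine ModuleCat.hom_ext (Submodule.linearMap_qext _ ?_)
    ext x
    rfl
  map_comp {U V W} φ ψ := by
    ext n : 2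
    refine ModuleCat.hom_ext (Submodule.linearMap_qext _ ?_)
    ext x
    rfl

instance (k : Type) [CommRing k] : (H0Functor k).Additive where
  map_add := by
    intro V W φ ψ
    ext n : 2
    refine ModuleCat.hom_ext (Submodule.linearMap_qext _ ?_)
    ext x
    show Submodule.Quotient.mk ((φ.app n).hom x + (ψ.app n).hom x) =
      (((H0Functor k).map φ).app n).hom (Submodule.Quotient.mk x) +
      (((H0Functor k).map ψ).app n).hom (Submodule.Quotient.mk x)
    rw [Submodule.Quotient.mk_add]
    rfl

/-- The homology functor `H_s(−) = Tor_s^{ℂ̃}(ℂ̃₀, −)`, as the `s`-th left derived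
functor of `H₀`. -/
noncomputable def Hs (k : Type) [CommRing k] [EnoughProjectives (FIMod k)] (s : ℕ) :
    FIMod k ⥤ FIMod k :=
  (H0Functor k).leftDerived s

/-- Strictly monotone injections `[i] → [n]`, a set of representatives for the orbits of
the right action of `S_i` on `FI(i,n)`. -/
def OrdInj (i n : ℕ) : Type := {e : Fin i ↪ Fin n // StrictMono e}

noncomputable instance (i n : ℕ) : Fintype (OrdInj i n) := by
  classical
  unfold OrdInj
  infer_instance

/-- The canonical map `⊕_{e ∈ OrdInj(i,n)} V_i → V_n`, `(v_e) ↦ Σ_e e·v_e`.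
It is bijective for every `n` exactly when `V` is the induced module
`ℂ̃ ⊗_{k[S_i]} V_i`. -/
noncomputable def basicMap {k : Type} [CommRing k] (V : FIMod k) (i n : ℕ) :
    (OrdInj i n → V.obj (FI.of i)) →ₗ[k] V.obj (FI.of n) :=
  ∑ e : OrdInj i n, (V.map (e.1 : FI.of i ⟶ FI.of n)).hom.comp (LinearMap.proj e)

/-- `V` is (isomorphic to) a basic `♯`-filtered module `ℂ̃ ⊗_{k[S_i]} T` with `T = V_i`. -/
def BasicSharp {k : Type} [CommRing k] (V : FIMod k) (i : ℕ) : Prop :=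
  (∀ j : ℕ, j < i → Subsingleton (V.obj (FI.of j))) ∧
    ∀ n : ℕ, Function.Bijective (basicMap V i n)

/-- `V` admits a filtration of length `m` whose successive quotients are basic
`♯`-filtered modules. -/
def SharpChain {k : Type} [CommRing k] : ℕ → FIMod k → Prop
  | 0, V => IsZero V
  | m + 1, V => ∃ (U W : FIMod k) (f : U ⟶ V) (g : V ⟶ W) (w : f ≫ g = 0),
      (ShortComplex.mk f g w).ShortExact ∧ SharpChain m U ∧ ∃ i, BasicSharp W i

/-- `V` is a `♯`-filtered `FI`-module. -/
def SharpFiltered {k : Type} [CommRing k] (V : FIMod k) : Prop :=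
  ∃ m, SharpChain m V

/-- `pdLE n M` : `M` has projective dimension `≤ n`. -/
noncomputable def pdLE {C : Type*} [Category C] [Abelian C] : ℕ → C → Prop
  | 0, M => Projective M
  | n + 1, M => ∃ (P : C) (f : P ⟶ M), Projective P ∧ Epi f ∧ pdLE n (kernel f)

/-- The `d`-th iterated shift `Σ_d V`. -/
def shiftIter (k : Type) [CommRing k] : ℕ → FIMod k → FIMod k
  | 0, V => V
  | d + 1, V => (shiftF k).obj (shiftIter k d V)

/-- A permutation of `[i]` as a morphism in `FI`. -/
def permHom (i : ℕ) (g : Equiv.Perm (Fin i)) : FI.of i ⟶ FI.of i := g.toEmbedding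

/-- The representation of the symmetric group `S_i` on `V_i` coming from the
`FI`-module structure. -/
def permRep {k : Type} [CommRing k] (V : FIMod k) (i : ℕ) :
    Representation k (Equiv.Perm (Fin i)) (V.obj (FI.of i)) where
  toFun g := (V.map (permHom i g)).hom
  map_one' := by
    have h1 : permHom i 1 = 𝟙 (FI.of i) := rfl
    show (V.map (permHom i 1)).hom = (1 : Module.End k (V.obj (FI.of i)))
    rw [h1, V.map_id]; rfl
  map_mul' g h := by
    have h1 : permHom i (g * h) = permHom i h ≫ permHom i g := rfl
    show (V.map (permHom i (g * h))).hom = (V.map (permHom i g)).hom * (V.map (permHom i h)).hom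
    rw [h1, V.map_comp]; rfl

/-!
An injection `[j+1] → [n+1]` either misses `0`, and then factors through the standard inclusion
`[n] ↪ [n+1]`, or takes the value `0` at exactly one point `r`, and is then determined by its
restriction to the other `j` points. Linearizing, `Σ M(j+1) ≅ M(j+1) ⊕ M(j)^{⊕ (j+1)}`, where the
first summand is the image of `M(j+1) → Σ M(j+1)`; hence `D M(j+1) ≅ M(j)^{⊕ (j+1)}`, while
`M(0) → Σ M(0)` is an isomorphism. Thus for a representable `V` the module `Σ V` is projective and
`V → Σ V` splits. Both properties pass to sums and retracts, hence to every projective `V`, and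
then `D V` is a direct summand of the projective `Σ V`.
-/

namespace Finsupp

variable {α β α' β' M : Type*} [AddCommMonoid M]

theorem mapDomain_mapDomain_of_comm {f : α → β} {g : β → β'} {f' : α' → β'} {h : α → α'}
    (hcomm : ∀ a, g (f a) = f' (h a)) (l : α →₀ M) :
    mapDomain g (mapDomain f l) = mapDomain f' (mapDomain h l) := by
  rw [← mapDomain_comp, ← mapDomain_comp]
  exact congrArg (mapDomain · l) (funext hcomm)

theorem comapDomain_mapDomain_of_disjoint {f : α → β} {f' : α' → β} (hf' : Function.Injective f')
    (hdisj : ∀ a a', f a ≠ f' a') (l : α →₀ M) :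
    comapDomain f' (mapDomain f l) hf'.injOn = 0 := by
  ext a'
  rw [comapDomain_apply, mapDomain_of_notMem_range _ _ ?_, coe_zero, Pi.zero_apply]
  rintro ⟨a, ha⟩
  exact hdisj a a' ha

theorem mapDomain_comapDomain_eq_filter {f : α → β} (hf : Function.Injective f) (l : β →₀ M)
    (p : β → Prop) [DecidablePred p] (hp : ∀ b, b ∈ Set.range f ↔ p b) :
    mapDomain f (comapDomain f l hf.injOn) = l.filter p := by
  ext b
  rw [filter_apply]
  split_ifs with hb
  · obtain ⟨a, rfl⟩ := (hp b).2 hb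
    rw [mapDomain_apply hf, comapDomain_apply]
  · exact mapDomain_of_notMem_range _ _ (mt (hp b).1 hb)

theorem comapDomain_mapDomain_of_pullback {f : α → β} {f' : α' → β'} {g : β → β'}
    {h : α → α'} (hf : Function.Injective f) (hf' : Function.Injective f')
    (hcomm : ∀ a, g (f a) = f' (h a)) (hpb : ∀ b, g b ∈ Set.range f' → b ∈ Set.range f)
    (l : β →₀ M) :
    comapDomain f' (mapDomain g l) hf'.injOn = mapDomain h (comapDomain f l hf.injOn) := by
  induction l using Finsupp.induction_linear with
  | zero => simp
  | add l₁ l₂ h₁ h₂ =>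
    rw [mapDomain_add, comapDomain_add_of_injective hf', comapDomain_add_of_injective hf,
      mapDomain_add, h₁, h₂]
  | single b m =>
    by_cases hb : b ∈ Set.range f
    · obtain ⟨a, rfl⟩ := hb
      rw [mapDomain_single, hcomm, comapDomain_single, comapDomain_single, mapDomain_single]
    · rw [mapDomain_single, comapDomain_single_of_not_mem_range (mt (hpb b) hb),
        comapDomain_single_of_not_mem_range hb, mapDomain_zero]

end Finsupp

section CokernelOfSplitMono

variable {C : Type*} [Category C] [Preadditive C] {A B : C} (f : A ⟶ B) [HasCokernel f]

noncomputable def cokernelSplitting (ρ : B ⟶ A) (hρ : f ≫ ρ = 𝟙 A) :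
    (ShortComplex.mk f (cokernel.π f) (cokernel.condition f)).Splitting where
  r := ρ
  s := cokernel.desc f (𝟙 B - ρ ≫ f) (by simp [reassoc_of% hρ])
  f_r := hρ
  s_g := coequalizer.hom_ext (by simp)
  id := by simp

lemma projective_cokernel_of_retraction (ρ : B ⟶ A) (hρ : f ≫ ρ = 𝟙 A) [Projective B] :
    Projective (cokernel f) :=
  Retract.projective ⟨_, _, (cokernelSplitting f ρ hρ).s_g⟩

lemma projective_of_retraction (ρ : B ⟶ A) (hρ : f ≫ ρ = 𝟙 A)
    [HasBinaryBiproduct A (cokernel f)] [Projective A] [Projective (cokernel f)] : Projective B :=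
  Projective.of_iso (cokernelSplitting f ρ hρ).isoBinaryBiproduct.symm inferInstance

/-- The hypotheses say that `B ≅ A ⊞ ⨁ X` with `f` the inclusion of `A`. -/
noncomputable def cokernelIsoBiproduct {ι : Type} [Fintype ι] [DecidableEq ι] {X : ι → C}
    [HasBiproduct X] (ρ : B ⟶ A) (q : ∀ r, B ⟶ X r) (s : ∀ r, X r ⟶ B)
    (hfq : ∀ r, f ≫ q r = 0) (hsq : ∀ r, s r ≫ q r = 𝟙 _)
    (hsq_ne : ∀ r r', r ≠ r' → s r ≫ q r' = 0) (htotal : ρ ≫ f + ∑ r, q r ≫ s r = 𝟙 B) :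
    cokernel f ≅ ⨁ X where
  hom := biproduct.lift fun r => cokernel.desc f (q r) (hfq r)
  inv := biproduct.desc fun r => s r ≫ cokernel.π f
  hom_inv_id := by
    have hπ : (∑ r, q r ≫ s r) ≫ cokernel.π f = cokernel.π f := by
      rw [← add_sub_cancel_left (ρ ≫ f) (∑ r, q r ≫ s r), htotal, Preadditive.sub_comp]
      simp
    rw [biproduct.lift_desc, ← cancel_epi (cokernel.π f), Preadditive.comp_sum]
    simpa [Preadditive.sum_comp] using hπ
  inv_hom_id := by
    refine biproduct.hom_ext' _ _ fun r => biproduct.hom_ext _ _ fun r' => ?_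
    simp only [biproduct.ι_desc_assoc, Category.assoc, biproduct.lift_π, cokernel.π_desc,
      Category.id_comp]
    rcases eq_or_ne r r' with rfl | h
    · rw [hsq, biproduct.ι_π_self]
    · rw [hsq_ne r r' h, biproduct.ι_π_ne _ h]

end CokernelOfSplitMono

section Embeddings

variable {i j m n : ℕ}

lemma mem_range_trans_succEmb_iff (e : Fin i ↪ Fin (n + 1)) :
    e ∈ Set.range (fun e' : Fin i ↪ Fin n => e'.trans (Fin.succEmb n)) ↔ ∀ x, e x ≠ 0 := by
  refine ⟨?_, fun he => ?_⟩
  · rintro ⟨e', rfl⟩ x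
    exact Fin.succ_ne_zero _
  · refine ⟨⟨fun x => (e x).pred (he x), fun a b hab => e.injective ?_⟩, ?_⟩
    · simpa using congrArg Fin.succ hab
    · exact DFunLike.ext _ _ fun x => Fin.succ_pred _ (he x)

lemma trans_succEmb_injective :
    Function.Injective fun e : Fin i ↪ Fin n => e.trans (Fin.succEmb n) :=
  fun _ _ h => DFunLike.ext _ _ fun x => Fin.succ_injective _ (DFunLike.congr_fun h x)

def insertZeroEmb (r : Fin (j + 1)) (f : Fin j ↪ Fin n) : Fin (j + 1) ↪ Fin (n + 1) :=
  ⟨Fin.insertNth r 0 (fun t => (f t).succ), by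
    intro a b hab
    induction a using Fin.succAboveCases r <;> induction b using Fin.succAboveCases r <;>
      simp_all [Fin.succ_ne_zero, eq_comm (a := (0 : Fin (n + 1)))]⟩

@[simp] lemma insertZeroEmb_apply_same (r : Fin (j + 1)) (f : Fin j ↪ Fin n) :
    insertZeroEmb r f r = 0 :=
  Fin.insertNth_apply_same (α := fun _ => Fin (n + 1)) r 0 (fun t => (f t).succ)

@[simp] lemma insertZeroEmb_apply_succAbove (r : Fin (j + 1)) (f : Fin j ↪ Fin n) (t : Fin j) :
    insertZeroEmb r f (r.succAbove t) = (f t).succ :=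
  Fin.insertNth_apply_succAbove (α := fun _ => Fin (n + 1)) r 0 (fun t => (f t).succ) t

lemma insertZeroEmb_injective (r : Fin (j + 1)) :
    Function.Injective (insertZeroEmb (n := n) r) := by
  intro f g hfg
  refine DFunLike.ext _ _ fun t => ?_
  simpa using DFunLike.congr_fun hfg (r.succAbove t)

lemma mem_range_insertZeroEmb_iff (r : Fin (j + 1)) (e : Fin (j + 1) ↪ Fin (n + 1)) :
    e ∈ Set.range (insertZeroEmb r) ↔ e r = 0 := by
  refine ⟨?_, fun he => ?_⟩
  · rintro ⟨f, rfl⟩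
    exact insertZeroEmb_apply_same r f
  · obtain ⟨f, hf⟩ := (mem_range_trans_succEmb_iff ((Fin.succAboveEmb r).trans e)).2
      fun t ht => Fin.succAbove_ne r t (e.injective (ht.trans he.symm))
    refine ⟨f, DFunLike.ext _ _ fun x => ?_⟩
    induction x using Fin.succAboveCases r with
    | x => rw [insertZeroEmb_apply_same, he]
    | p t => simpa using DFunLike.congr_fun hf t

lemma insertZeroEmb_trans_extEmb (r : Fin (j + 1)) (f : Fin j ↪ Fin m) (g : Fin m ↪ Fin n) :
    (insertZeroEmb r f).trans (extEmb g) = insertZeroEmb r (f.trans g) := by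
  refine DFunLike.ext _ _ fun x => ?_
  induction x using Fin.succAboveCases r <;> simp

lemma extEmb_eq_zero_iff (g : Fin m ↪ Fin n) (x : Fin (m + 1)) : extEmb g x = 0 ↔ x = 0 := by
  induction x using Fin.cases <;> simp [Fin.succ_ne_zero]

end Embeddings

section ShiftOfRepresentable

open Finsupp

variable {k}

lemma FIMod.hom_ext {V W : FIMod k} {φ ψ : V ⟶ W} (h : ∀ n v, φ.app n v = ψ.app n v) :
    φ = ψ :=
  NatTrans.ext (funext fun n => ModuleCat.hom_ext (LinearMap.ext (h n)))

variable (k)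

noncomputable def insertZeroHom (j : ℕ) (r : Fin (j + 1)) :
    Mrep k j ⟶ (shiftF k).obj (Mrep k (j + 1)) where
  app n := ModuleCat.ofHom (lmapDomain k k (insertZeroEmb (n := n.n) r))
  naturality m n g := by
    ext l : 3
    exact mapDomain_mapDomain_of_comm (fun f => (insertZeroEmb_trans_extEmb r f g).symm) l

noncomputable def restrictZeroHom (j : ℕ) (r : Fin (j + 1)) :
    (shiftF k).obj (Mrep k (j + 1)) ⟶ Mrep k j where
  app n := ModuleCat.ofHom (lcomapDomain (insertZeroEmb (n := n.n) r) (insertZeroEmb_injective r))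
  naturality m n g := by
    ext l : 3
    refine comapDomain_mapDomain_of_pullback (insertZeroEmb_injective r)
      (insertZeroEmb_injective r) (fun f => insertZeroEmb_trans_extEmb r f g) (fun e he => ?_) l
    exact (mem_range_insertZeroEmb_iff r e).2 <| (extEmb_eq_zero_iff g (e r)).1 <|
      (mem_range_insertZeroEmb_iff r (e.trans (extEmb g))).1 he

noncomputable def shiftRetraction (i : ℕ) : (shiftF k).obj (Mrep k i) ⟶ Mrep k i where
  app n := ModuleCat.ofHom (lcomapDomain _ (trans_succEmb_injective (i := i) (n := n.n)))
  naturality m n g := by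
    ext l : 3
    refine comapDomain_mapDomain_of_pullback trans_succEmb_injective trans_succEmb_injective
      (fun f => rfl) (fun e he => ?_) l
    exact (mem_range_trans_succEmb_iff e).2 fun x hx =>
      (mem_range_trans_succEmb_iff (e.trans (extEmb g))).1 he x
        ((extEmb_eq_zero_iff g (e x)).2 hx)

lemma toShift_shiftRetraction (i : ℕ) :
    toShift k (Mrep k i) ≫ shiftRetraction k i = 𝟙 _ :=
  FIMod.hom_ext fun _ l => comapDomain_mapDomain _ trans_succEmb_injective l

lemma shiftRetraction_toShift_zero : shiftRetraction k 0 ≫ toShift k (Mrep k 0) = 𝟙 _ :=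
  FIMod.hom_ext fun _ l => mapDomain_comapDomain _ trans_succEmb_injective l fun e _ =>
    (mem_range_trans_succEmb_iff e).2 fun x => x.elim0

lemma insertZeroHom_restrictZeroHom (j : ℕ) (r : Fin (j + 1)) :
    insertZeroHom k j r ≫ restrictZeroHom k j r = 𝟙 _ :=
  FIMod.hom_ext fun _ l => comapDomain_mapDomain _ (insertZeroEmb_injective r) l

lemma insertZeroHom_restrictZeroHom_of_ne (j : ℕ) {r r' : Fin (j + 1)} (h : r ≠ r') :
    insertZeroHom k j r ≫ restrictZeroHom k j r' = 0 := by
  refine FIMod.hom_ext fun n l => ?_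
  refine comapDomain_mapDomain_of_disjoint (insertZeroEmb_injective r') (fun f f' hff' => ?_) l
  obtain ⟨t, rfl⟩ := Fin.exists_succAbove_eq h.symm
  simpa [Fin.succ_ne_zero] using DFunLike.congr_fun hff' (r.succAbove t)

lemma toShift_restrictZeroHom (j : ℕ) (r : Fin (j + 1)) :
    toShift k (Mrep k (j + 1)) ≫ restrictZeroHom k j r = 0 := by
  refine FIMod.hom_ext fun n l => ?_
  refine comapDomain_mapDomain_of_disjoint (insertZeroEmb_injective r) (fun e f hef => ?_) l
  exact Fin.succ_ne_zero _ ((DFunLike.congr_fun hef r).trans (insertZeroEmb_apply_same r f))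

lemma shiftRetraction_toShift_app (i : ℕ) (n : FI) (l : ((shiftF k).obj (Mrep k i)).obj n) :
    (shiftRetraction k i ≫ toShift k (Mrep k i)).app n l =
      Finsupp.filter (fun e : Fin i ↪ Fin (n.n + 1) => ∀ x, e x ≠ 0) l :=
  mapDomain_comapDomain_eq_filter trans_succEmb_injective l _ mem_range_trans_succEmb_iff

lemma restrictZeroHom_insertZeroHom_app (j : ℕ) (r : Fin (j + 1)) (n : FI)
    (l : ((shiftF k).obj (Mrep k (j + 1))).obj n) :
    (restrictZeroHom k j r ≫ insertZeroHom k j r).app n l =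
      Finsupp.filter (fun e : Fin (j + 1) ↪ Fin (n.n + 1) => e r = 0) l :=
  mapDomain_comapDomain_eq_filter (insertZeroEmb_injective r) l _ (mem_range_insertZeroEmb_iff r)

lemma filter_ne_zero_add_sum_filter_eq_zero {M : Type*} [AddCommMonoid M] {j n : ℕ}
    (l : (Fin (j + 1) ↪ Fin (n + 1)) →₀ M) :
    l.filter (fun e => ∀ x, e x ≠ 0) + ∑ r, l.filter (fun e => e r = 0) = l := by
  ext e
  simp only [Finsupp.add_apply, Finsupp.finsetSum_apply, Finsupp.filter_apply]
  by_cases he : ∀ x, e x ≠ 0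
  · simp [he]
  · obtain ⟨r₀, hr₀⟩ := not_forall_not.1 he
    have hzero : ∀ r, e r = 0 ↔ r₀ = r := fun r =>
      ⟨fun hr => e.injective (hr₀.trans hr.symm), fun h => h ▸ hr₀⟩
    simp [hzero]

lemma shiftRetraction_toShift_add_sum (j : ℕ) :
    shiftRetraction k (j + 1) ≫ toShift k (Mrep k (j + 1)) +
      ∑ r, restrictZeroHom k j r ≫ insertZeroHom k j r = 𝟙 _ := by
  refine FIMod.hom_ext fun n l => ?_
  simp only [NatTrans.app_add, NatTrans.app_sum, ModuleCat.hom_add, ModuleCat.hom_sum,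
    LinearMap.add_apply, LinearMap.sum_apply, shiftRetraction_toShift_app,
    restrictZeroHom_insertZeroHom_app, NatTrans.id_app, ModuleCat.id_apply]
  exact filter_ne_zero_add_sum_filter_eq_zero l

end ShiftOfRepresentable

noncomputable def dobjMrepSuccIso (j : ℕ) :
    Dobj k (Mrep k (j + 1)) ≅ ⨁ fun _ : Fin (j + 1) => Mrep k j :=
  cokernelIsoBiproduct _ (shiftRetraction k (j + 1)) (restrictZeroHom k j) (insertZeroHom k j)
    (toShift_restrictZeroHom k j) (insertZeroHom_restrictZeroHom k j)
    (fun _ _ => insertZeroHom_restrictZeroHom_of_ne k j) (shiftRetraction_toShift_add_sum k j)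

lemma isZero_Dobj_Mrep_zero : IsZero (Dobj k (Mrep k 0)) :=
  have : IsSplitEpi (toShift k (Mrep k 0)) := ⟨⟨_, shiftRetraction_toShift_zero k⟩⟩
  isZero_cokernel_of_epi _

section Yoneda

open Finsupp

variable {k}

/- `FI` is `ℕ` in disguise: the source of `e : Fin i ↪ Fin n.n` as a morphism of `FI` has to be
given (`X := FI.of i`), and rewriting under such coercions needs `erw`. -/
noncomputable def Mrep.desc (V : FIMod k) {i : ℕ} (x : V.obj (FI.of i)) : Mrep k i ⟶ V where
  app n := ModuleCat.ofHom
    (linearCombination k fun e : Fin i ↪ Fin n.n => V.map (X := FI.of i) e x)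
  naturality m n g := by
    refine ModuleCat.hom_ext (LinearMap.ext fun (l : (Fin i ↪ Fin m.n) →₀ k) => ?_)
    show linearCombination k _ (mapDomain (fun e => e.trans g) l) =
      (V.map g).hom (linearCombination k _ l)
    rw [linearCombination_mapDomain, apply_linearCombination]
    congr 2
    funext e
    exact (ConcreteCategory.congr_hom (V.map_comp (X := FI.of i) e g) x)

lemma Mrep.desc_app_single_id (V : FIMod k) {i : ℕ} (x : V.obj (FI.of i)) :
    (Mrep.desc V x).app (FI.of i) (single (𝟙 (FI.of i)) 1) = x :=
  (linearCombination_single k 1 _).trans <|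
    (one_smul k _).trans (ConcreteCategory.congr_hom (V.map_id _) x)

lemma Mrep.desc_comp {V W : FIMod k} {i : ℕ} (x : V.obj (FI.of i)) (φ : V ⟶ W) :
    Mrep.desc V x ≫ φ = Mrep.desc W (φ.app _ x) := by
  refine FIMod.hom_ext fun n (l : (Fin i ↪ Fin n.n) →₀ k) => ?_
  show (φ.app n).hom (linearCombination k _ l) = linearCombination k _ l
  rw [apply_linearCombination]
  congr 2
  funext e
  exact NatTrans.naturality_apply φ (X := FI.of i) e x

lemma Mrep.map_single_id {i : ℕ} {n : FI} (f : FI.of i ⟶ n) (a : k) :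
    (Mrep k i).map f (single (𝟙 (FI.of i)) a) = single f a :=
  mapDomain_single

lemma Mrep.eq_desc {V : FIMod k} {i : ℕ} (φ : Mrep k i ⟶ V) :
    φ = Mrep.desc V (φ.app (FI.of i) (single (𝟙 (FI.of i)) 1)) := by
  refine NatTrans.ext (funext fun n => ModuleCat.hom_ext (lhom_ext fun e a => ?_))
  have hsingle : single e a = (Mrep k i).map (X := FI.of i) e (a • single (𝟙 (FI.of i)) 1) := by
    erw [smul_single_one, Mrep.map_single_id]
    rfl
  refine (congrArg (φ.app n) hsingle).trans ?_
  erw [NatTrans.naturality_apply, map_smul, map_smul]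
  exact (linearCombination_single (v := fun e : Fin i ↪ Fin n.n => V.map (X := FI.of i) e _)
    k a e).symm

lemma projective_Mrep (i : ℕ) : Projective (Mrep k i) where
  factors {E W} φ π _ := by
    obtain ⟨y, hy⟩ := (ModuleCat.epi_iff_surjective (π.app (FI.of i))).1 inferInstance
      (φ.app (FI.of i) (single (𝟙 (FI.of i)) 1))
    exact ⟨Mrep.desc E y, by rw [Mrep.desc_comp, hy, ← Mrep.eq_desc]⟩

end Yoneda

section Cover

open Finsupp

variable {k}

noncomputable def Mrep.cover (V : FIMod k) :
    ∐ (fun s : (n : ℕ) × V.obj (FI.of n) => Mrep k s.1) ⟶ V :=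
  Sigma.desc fun s => Mrep.desc V s.2

instance (V : FIMod k) : Epi (Mrep.cover V) := by
  refine @NatTrans.epi_of_epi_app _ _ _ _ _ _ _ fun n => ?_
  refine (ModuleCat.epi_iff_surjective _).2 fun v => ?_
  let s : (n : ℕ) × V.obj (FI.of n) := ⟨n.n, v⟩
  refine ⟨(Sigma.ι (fun s : (n : ℕ) × V.obj (FI.of n) => Mrep k s.1) s).app n
    (single (𝟙 (FI.of n.n)) 1), ?_⟩
  have hs : Sigma.ι _ s ≫ Mrep.cover V = Mrep.desc V s.2 := Sigma.ι_desc _ s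
  exact (congrArg (fun φ : Mrep k n.n ⟶ V => φ.app n (single (𝟙 (FI.of n.n)) 1)) hs).trans
    (Mrep.desc_app_single_id V s.2)

end Cover

lemma toShift_naturality {V W : FIMod k} (φ : V ⟶ W) :
    φ ≫ toShift k W = toShift k V ≫ (shiftF k).map φ :=
  (natToShift k).naturality φ

instance : PreservesColimitsOfSize.{0, 0} (shiftF k) :=
  inferInstanceAs (PreservesColimitsOfSize.{0, 0} ((Functor.whiskeringLeft FI FI _).obj iota))

structure ShiftSplits (V : FIMod k) : Prop where
  projective_shift : Projective ((shiftF k).obj V)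
  exists_retraction : ∃ ρ, toShift k V ≫ ρ = 𝟙 V

namespace ShiftSplits

variable {k}

lemma projective_Dobj {V : FIMod k} (h : ShiftSplits k V) : Projective (Dobj k V) :=
  have := h.projective_shift
  have ⟨ρ, hρ⟩ := h.exists_retraction
  projective_cokernel_of_retraction _ ρ hρ

lemma of_retract {V W : FIMod k} (e : Retract V W) (h : ShiftSplits k W) : ShiftSplits k V where
  projective_shift :=
    have := h.projective_shift
    (e.map (shiftF k)).projective
  exists_retraction := by
    obtain ⟨ρ, hρ⟩ := h.exists_retraction
    refine ⟨(shiftF k).map e.i ≫ ρ ≫ e.r, ?_⟩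
    rw [← Category.assoc, ← toShift_naturality, Category.assoc, reassoc_of% hρ, e.retract]

lemma sigma {ι : Type} (F : ι → FIMod k) (h : ∀ s, ShiftSplits k (F s)) :
    ShiftSplits k (∐ F) where
  projective_shift :=
    have := fun s => (h s).projective_shift
    Projective.of_iso (asIso (sigmaComparison (shiftF k) F)) inferInstance
  exists_retraction := by
    choose ρ hρ using fun s => (h s).exists_retraction
    refine ⟨inv (sigmaComparison (shiftF k) F) ≫ Sigma.desc fun s => ρ s ≫ Sigma.ι F s,
      Sigma.hom_ext _ _ fun s => ?_⟩
    rw [← Category.assoc, toShift_naturality, Category.assoc, ← ι_comp_sigmaComparison_assoc,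
      IsIso.hom_inv_id_assoc, Sigma.ι_desc, reassoc_of% hρ s, Category.comp_id]

end ShiftSplits

lemma shiftSplits_Mrep (i : ℕ) : ShiftSplits k (Mrep k i) where
  projective_shift := by
    have := projective_Mrep (k := k) i
    have : Projective (cokernel (toShift k (Mrep k i))) := by
      cases i with
      | zero => exact (isZero_Dobj_Mrep_zero k).projective
      | succ j =>
        have := projective_Mrep (k := k) j
        exact Projective.of_iso (dobjMrepSuccIso k j).symm inferInstance
    exact projective_of_retraction _ _ (toShift_shiftRetraction k i)
  exists_retraction := ⟨_, toShift_shiftRetraction k i⟩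

lemma shiftSplits_of_projective {V : FIMod k} (hV : Projective V) : ShiftSplits k V :=
  (ShiftSplits.sigma (fun s : (n : ℕ) × V.obj (FI.of n) => Mrep k s.1)
    fun s => shiftSplits_Mrep k s.1).of_retract
    ⟨Projective.factorThru (𝟙 V) (Mrep.cover V), Mrep.cover V, Projective.factorThru_comp _ _⟩

/-- `D M(i) ≅ M(i-1)^{⊕ i}` for `i ≥ 1`, `D M(0) = 0`, and `D` preserves projectives. -/
theorem stmt_7 (k : Type) [CommRing k] (i : ℕ) (hi : 1 ≤ i) :
    Nonempty (Dobj k (Mrep k i) ≅ ⨁ fun _ : Fin i => Mrep k (i - 1)) ∧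
    IsZero (Dobj k (Mrep k 0)) ∧
    (∀ V : FIMod k, Projective V → Projective (Dobj k V)) := by
  refine ⟨?_, isZero_Dobj_Mrep_zero k, fun V hV => (shiftSplits_of_projective k hV).projective_Dobj⟩
  obtain ⟨j, rfl⟩ := Nat.exists_eq_add_of_le' hi
  exact ⟨dobjMrepSuccIso k j⟩
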